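/- arXiv:1209.6158 — 7 statements merged into one kernel-verified Lean document; each statement's English description precedes it below -/
import Mathlib

section
/- For every n : ℕ and every b : ℕ → Bool, max (HGP ⌈n/2⌉ (ODD b)) (HGP ⌊n/2⌋ (EVEN b)) ≤ HGP n b. (Splitting the rumor spreading at the very beginning between two processors cannot increase the time complexity.) -/
def tailSeq (b : ℕ → Bool) : ℕ → Bool := fun i => b (i+1)
def oddSeq (b : ℕ → Bool) : ℕ → Bool := fun i => b (2*i)
def evenSeq (b : ℕ → Bool) : ℕ → Bool := fun i => b (2*i+1)

/-- Time complexity of the GP algorithm with `n` uninformed processors under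
failure pattern `b` (`b i = true` means the `i`-th request is successful). -/
def HGP : ℕ → (ℕ → Bool) → ℕ
  | 0, _ => 0
  | n+1, b =>
    if b 0 then
      1 + max (HGP ((n+1)/2) (oddSeq (tailSeq b))) (HGP (n/2) (evenSeq (tailSeq b)))
    else
      1 + HGP n (tailSeq b)
decreasing_by all_goals omega

/-!
Strong induction on `n`, by cases on the first request `b 0`, which is also the first request of
the odd half `oddSeq b`. The even half `evenSeq b = oddSeq (tailSeq b)` is the odd half of the run
after that request. After its first step the odd half continues with `n / 2` processors on
`tailSeq (oddSeq b) = evenSeq (tailSeq b)`: if `b 0` failed, both halves are bounded by the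
induction hypothesis for `n` on `tailSeq b`; if it succeeded, the even half is the first branch of
`HGP (n + 1) b` itself, and the induction hypothesis for `n / 2` compares the odd half with the
second branch.
-/

theorem oddSeq_zero (b : ℕ → Bool) : oddSeq b 0 = b 0 := rfl

theorem evenSeq_eq_oddSeq_tailSeq (b : ℕ → Bool) : evenSeq b = oddSeq (tailSeq b) := rfl

theorem tailSeq_oddSeq (b : ℕ → Bool) : tailSeq (oddSeq b) = evenSeq (tailSeq b) := by
  funext i
  simp only [tailSeq, oddSeq, evenSeq, Nat.mul_succ]

section HGP

variable {n : ℕ} {b : ℕ → Bool}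

theorem hgp_succ_of_false (h : b 0 = false) : HGP (n + 1) b = 1 + HGP n (tailSeq b) := by
  rw [HGP, h]
  rfl

theorem hgp_succ_of_true (h : b 0 = true) :
    HGP (n + 1) b =
      1 + max (HGP ((n + 1) / 2) (oddSeq (tailSeq b))) (HGP (n / 2) (evenSeq (tailSeq b))) := by
  rw [HGP, h]
  rfl

theorem hgp_oddSeq_succ_of_false (h : b 0 = false) :
    HGP (n + 1) (oddSeq b) = 1 + HGP n (evenSeq (tailSeq b)) := by
  rw [hgp_succ_of_false (by rwa [oddSeq_zero]), tailSeq_oddSeq]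

theorem hgp_oddSeq_succ_of_true (h : b 0 = true) :
    HGP (n + 1) (oddSeq b) = 1 + max (HGP ((n + 1) / 2) (oddSeq (evenSeq (tailSeq b))))
      (HGP (n / 2) (evenSeq (evenSeq (tailSeq b)))) := by
  rw [hgp_succ_of_true (by rwa [oddSeq_zero]), tailSeq_oddSeq]

theorem hgp_splitting_succ_of_false (h : b 0 = false)
    (ih : max (HGP ((n + 1) / 2) (oddSeq (tailSeq b))) (HGP (n / 2) (evenSeq (tailSeq b))) ≤
      HGP n (tailSeq b)) :
    max (HGP ((n + 2) / 2) (oddSeq b)) (HGP ((n + 1) / 2) (evenSeq b)) ≤ HGP (n + 1) b := by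
  rw [hgp_succ_of_false h, show (n + 2) / 2 = n / 2 + 1 by omega, hgp_oddSeq_succ_of_false h,
    evenSeq_eq_oddSeq_tailSeq b]
  omega

theorem hgp_splitting_succ_of_true (h : b 0 = true)
    (ih : max (HGP ((n / 2 + 1) / 2) (oddSeq (evenSeq (tailSeq b))))
      (HGP (n / 2 / 2) (evenSeq (evenSeq (tailSeq b)))) ≤ HGP (n / 2) (evenSeq (tailSeq b))) :
    max (HGP ((n + 2) / 2) (oddSeq b)) (HGP ((n + 1) / 2) (evenSeq b)) ≤ HGP (n + 1) b := by
  rw [hgp_succ_of_true h, show (n + 2) / 2 = n / 2 + 1 by omega, hgp_oddSeq_succ_of_true h,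
    evenSeq_eq_oddSeq_tailSeq b]
  omega

end HGP

/-- Splitting the rumor spreading at the very beginning between two processors
cannot increase the time complexity. -/
theorem hgp_splitting (n : ℕ) (b : ℕ → Bool) :
    max (HGP ((n+1)/2) (oddSeq b)) (HGP (n/2) (evenSeq b)) ≤ HGP n b := by
  induction n using Nat.strong_induction_on generalizing b with
  | _ n ih =>
    match n, b0 : b 0 with
    | 0, _ => simp [HGP]
    | n + 1, false => exact hgp_splitting_succ_of_false b0 (ih n (by omega) _)
    | n + 1, true => exact hgp_splitting_succ_of_true b0 (ih (n / 2) (by omega) _)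
end

section
/- The function HGP is monotone increasing in its first argument: for all m n : ℕ with m ≤ n and every b : ℕ → Bool, HGP m b ≤ HGP n b. -/
@[simp]
theorem HGP_zero (b : ℕ → Bool) : HGP 0 b = 0 := by
  rw [HGP]

theorem HGP_succ (n : ℕ) (b : ℕ → Bool) :
    HGP (n + 1) b =
      if b 0 then
        1 + max (HGP ((n + 1) / 2) (oddSeq (tailSeq b))) (HGP (n / 2) (evenSeq (tailSeq b)))
      else
        1 + HGP n (tailSeq b) := by
  rw [HGP]

/- Both branches of the recursion call `HGP` on the same sequences with sizes `n`, `⌈n/2⌉`, `⌊n/2⌋`,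
all monotone in `n`, so strong induction on `n` (for all `m` and `b` at once) goes through. -/
/-- `HGP` is monotone increasing in the number of uninformed processors. -/
theorem hgp_monotone_n (m n : ℕ) (hmn : m ≤ n) (b : ℕ → Bool) :
    HGP m b ≤ HGP n b := by
  induction n using Nat.strong_induction_on generalizing m b with
  | _ n ih =>
    rcases m with _ | m
    · simp
    obtain ⟨n, rfl⟩ : ∃ k, n = k + 1 := ⟨n - 1, by omega⟩
    rw [HGP_succ, HGP_succ]
    cases b 0
    · exact Nat.add_le_add_left (ih n (by omega) m (by omega) _) 1
    · exact Nat.add_le_add_left (max_le_max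
        (ih ((n + 1) / 2) (by omega) ((m + 1) / 2) (by omega) _)
        (ih (n / 2) (by omega) (m / 2) (by omega) _)) 1
end

section
/- Coupling of the GP and WU models: for every n : ℕ and every b : ℕ → Bool, (HGP n b : ℕ∞) ≤ HWU n b. That is, on every failure pattern the execution of the GP algorithm is at least as fast as the execution of the WU algorithm. -/
/-- Time complexity of the WU (wakeup) algorithm with `n` uninformed processors
under failure pattern `b`, valued in the extended naturals. -/
noncomputable def HWU : ℕ → (ℕ → Bool) → ℕ∞
  | 0, _ => 0
  | n+1, b =>
    have : Decidable (∃ k, b k = true) := Classical.propDecidable _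
    if h : ∃ k, b k = true then
      ((Nat.find h + 1 : ℕ) : ℕ∞) +
        max (HWU ((n+1)/2) (oddSeq (fun i => b (i + Nat.find h + 1))))
            (HWU (n/2) (evenSeq (fun i => b (i + Nat.find h + 1))))
    else ⊤
decreasing_by all_goals omega

/-!
Whenever WU makes its first successful request, at step `k + 1`, GP has by then spent the same
`k + 1` steps: its `k` failed requests each cost one step and one processor, and the successful one
splits the remaining `n - k` processors into halves, which are no larger than WU's halves of `n`.
Since `HGP` is monotone in the number of processors, induction on `n` compares the halves.
If the success comes after step `n + 1`, the bound `HGP (n + 1) b ≤ n + 1` suffices.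
-/

theorem HGP_succ_of_false {n : ℕ} {b : ℕ → Bool} (h : b 0 = false) :
    HGP (n + 1) b = 1 + HGP n (tailSeq b) := by
  simp [HGP, h]

theorem HGP_succ_of_true {n : ℕ} {b : ℕ → Bool} (h : b 0 = true) :
    HGP (n + 1) b =
      1 + max (HGP ((n + 1) / 2) (oddSeq (tailSeq b))) (HGP (n / 2) (evenSeq (tailSeq b))) := by
  simp [HGP, h]

theorem HGP_le (n : ℕ) (b : ℕ → Bool) : HGP n b ≤ n := by
  induction n using Nat.strong_induction_on generalizing b with
  | _ n ih =>
    match n with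
    | 0 => simp [HGP]
    | n + 1 =>
      cases h : b 0
      · have := ih n (by omega) (tailSeq b)
        rw [HGP_succ_of_false h]
        omega
      · have := ih ((n + 1) / 2) (by omega) (oddSeq (tailSeq b))
        have := ih (n / 2) (by omega) (evenSeq (tailSeq b))
        rw [HGP_succ_of_true h]
        omega

theorem HGP_mono {m n : ℕ} (hmn : m ≤ n) (b : ℕ → Bool) : HGP m b ≤ HGP n b := by
  induction n using Nat.strong_induction_on generalizing m b with
  | _ n ih =>
    match m, n with
    | 0, _ => simp [HGP]
    | m + 1, n + 1 =>
      cases h : b 0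
      · have := ih n (by omega) (show m ≤ n by omega) (tailSeq b)
        rw [HGP_succ_of_false h, HGP_succ_of_false h]
        omega
      · have := ih ((n + 1) / 2) (by omega) (show (m + 1) / 2 ≤ (n + 1) / 2 by omega)
          (oddSeq (tailSeq b))
        have := ih (n / 2) (by omega) (show m / 2 ≤ n / 2 by omega) (evenSeq (tailSeq b))
        rw [HGP_succ_of_true h, HGP_succ_of_true h]
        omega

theorem HGP_add_of_forall_lt_eq_false {k : ℕ} (m : ℕ) {b : ℕ → Bool}
    (hb : ∀ i < k, b i = false) : HGP (k + m) b = k + HGP m (fun i => b (i + k)) := by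
  induction k generalizing b with
  | zero => simp
  | succ k ih =>
    rw [show k + 1 + m = k + m + 1 by omega, HGP_succ_of_false (hb 0 (by omega)),
      ih (b := tailSeq b) fun i hi => hb (i + 1) (by omega)]
    simp only [tailSeq, add_assoc]
    omega

theorem HGP_succ_le_of_first_true {k : ℕ} (n : ℕ) {b : ℕ → Bool} (hk : b k = true)
    (hlt : ∀ i < k, b i = false) :
    HGP (n + 1) b ≤ k + 1 + max (HGP ((n + 1) / 2) (oddSeq fun i => b (i + k + 1)))
      (HGP (n / 2) (evenSeq fun i => b (i + k + 1))) := by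
  by_cases hkn : k ≤ n
  · have htail : tailSeq (fun i => b (i + k)) = fun i => b (i + k + 1) := by
      funext i
      simp only [tailSeq, add_right_comm]
    have hsplit : HGP (n + 1) b =
        k + 1 + max (HGP ((n - k + 1) / 2) (oddSeq fun i => b (i + k + 1)))
          (HGP ((n - k) / 2) (evenSeq fun i => b (i + k + 1))) := by
      rw [show n + 1 = k + (n - k + 1) by omega, HGP_add_of_forall_lt_eq_false _ hlt,
        HGP_succ_of_true (by simpa using hk), htail]
      omega
    have hodd := HGP_mono (m := (n - k + 1) / 2) (n := (n + 1) / 2) (by omega)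
      (oddSeq fun i => b (i + k + 1))
    have heven := HGP_mono (m := (n - k) / 2) (n := n / 2) (by omega)
      (evenSeq fun i => b (i + k + 1))
    omega
  · have := HGP_le (n + 1) b
    omega

/-- Coupling of the GP and WU models: on every failure pattern the GP execution
is at least as fast as the WU execution. -/
theorem hgp_le_hwu (n : ℕ) (b : ℕ → Bool) :
    (HGP n b : ℕ∞) ≤ HWU n b := by
  induction n using Nat.strong_induction_on generalizing b with
  | _ n ih =>
    match n with
    | 0 => simp [HGP, HWU]
    | n + 1 =>
      rw [HWU]
      by_cases h : ∃ k, b k = true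
      · rw [dif_pos h]
        have hfirst := Nat.cast_le (α := ℕ∞) |>.mpr <| HGP_succ_le_of_first_true n
          (Nat.find_spec h) fun i hi => by simpa using Nat.find_min h hi
        rw [Nat.cast_add, Nat.mono_cast.map_max] at hfirst
        refine hfirst.trans ?_
        gcongr <;> exact ih _ (by omega) _
      · rw [dif_neg h]
        exact le_top
end

section
/- For any probability measure D on the space ℕ → Bool (with the product σ-algebra, Bool discrete), any n : ℕ and any H : ℕ, we have D {b | (HWU n b : ℕ∞) ≤ H} ≤ D {b | HGP n b ≤ H}. That is, if the failure pattern is sampled from any distribution D, then the probability that the GP execution finishes within H rounds is at least the probability that the WU execution finishes within H rounds. -/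
/-! On every failure pattern, WU takes at least as many rounds as GP: a failed request costs
both one round, and a successful one splits both into the same two halves. Hence the event
that WU finishes within `H` rounds is contained in the event that GP does. -/

theorem HWU_succ_of_exists {b : ℕ → Bool} (h : ∃ k, b k = true) (m : ℕ) :
    HWU (m + 1) b = ((Nat.find h + 1 : ℕ) : ℕ∞) +
      max (HWU ((m + 1) / 2) (oddSeq (fun i => b (i + Nat.find h + 1))))
          (HWU (m / 2) (evenSeq (fun i => b (i + Nat.find h + 1)))) := by
  rw [HWU, dif_pos h]

theorem HWU_succ_of_forall_false {b : ℕ → Bool} (h : ¬∃ k, b k = true) (m : ℕ) :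
    HWU (m + 1) b = ⊤ := by
  rw [HWU, dif_neg h]

theorem HWU_succ_of_head_true {b : ℕ → Bool} (hb : b 0 = true) (m : ℕ) :
    HWU (m + 1) b = 1 + max (HWU ((m + 1) / 2) (oddSeq (tailSeq b)))
      (HWU (m / 2) (evenSeq (tailSeq b))) := by
  have h : ∃ k, b k = true := ⟨0, hb⟩
  have hfind : Nat.find h = 0 := (Nat.find_eq_zero h).2 hb
  rw [HWU_succ_of_exists h, hfind]
  rfl

theorem HWU_succ_of_head_false {b : ℕ → Bool} (hb : b 0 = false) (m : ℕ) :
    HWU (m + 1) b = 1 + HWU (m + 1) (tailSeq b) := by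
  by_cases h : ∃ k, b k = true
  · have h' : ∃ k, tailSeq b k = true := by
      obtain ⟨_ | k, hk⟩ := h
      · simp [hb] at hk
      · exact ⟨k, hk⟩
    have hfind : Nat.find h = Nat.find h' + 1 := Nat.find_comp_succ h h' (by simp [hb])
    have hshift : (fun i => tailSeq b (i + Nat.find h' + 1)) =
        fun i => b (i + Nat.find h + 1) := by
      funext i
      simp only [tailSeq, hfind, ← add_assoc]
    rw [HWU_succ_of_exists h, HWU_succ_of_exists h', hshift, hfind, ← add_assoc]
    push_cast
    ring
  · have h' : ¬∃ k, tailSeq b k = true := fun ⟨k, hk⟩ => h ⟨k + 1, hk⟩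
    rw [HWU_succ_of_forall_false h, HWU_succ_of_forall_false h', add_top]

/-- The slack `n ≤ m` is what makes the induction go through: after a failed request GP
continues with one processor fewer, while WU still faces all of them. -/
theorem HGP_le_HWU_of_le {n m : ℕ} (hnm : n ≤ m) (b : ℕ → Bool) :
    (HGP n b : ℕ∞) ≤ HWU m b := by
  induction n using Nat.strong_induction_on generalizing m b with
  | _ n ih =>
    match n, m, hnm with
    | 0, _, _ => simp [HGP]
    | n + 1, m + 1, hnm =>
      cases hb : b 0 with
      | false =>
        rw [HGP, if_neg (by simp [hb]), HWU_succ_of_head_false hb]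
        push_cast
        gcongr
        exact ih n (by omega) (by omega) _
      | true =>
        rw [HGP, if_pos hb, HWU_succ_of_head_true hb]
        push_cast
        rw [Nat.mono_cast.map_max]
        gcongr
        · exact ih _ (by omega) (by omega) _
        · exact ih _ (by omega) (by omega) _

open MeasureTheory

theorem prob_hgp_fast_ge_prob_hwu_fast_general (D : Measure (ℕ → Bool))
    (n : ℕ) (H : ℕ) :
    D {b | HWU n b ≤ (H : ℕ∞)} ≤ D {b | HGP n b ≤ H} :=
  measure_mono fun b hb => by
    exact_mod_cast (HGP_le_HWU_of_le le_rfl b).trans hb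

/-- For failure patterns sampled from any probability distribution `D`, the GP
execution finishes within `H` rounds at least as likely as the WU execution. -/
theorem prob_hgp_fast_ge_prob_hwu_fast (D : Measure (ℕ → Bool))
    [IsProbabilityMeasure D] (n : ℕ) (H : ℕ) :
    D {b | HWU n b ≤ (H : ℕ∞)} ≤ D {b | HGP n b ≤ H} :=
  prob_hgp_fast_ge_prob_hwu_fast_general D n H
end

section
/- Tightness of the worst-case bound for the GP algorithm: for all m f : ℕ with f ≤ m, letting b : ℕ → Bool be the failure pattern with b i = false for i < f and b i = true for i ≥ f (i.e., the first f requested processors are failed), one has HGP m b = f + ⌈log₂ (m + 1 − f)⌉ (where ⌈log₂ x⌉ = Nat.clog 2 x). -/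
/-!
Each failed request costs one round and shifts the failure pattern by one, so after `f` rounds
the algorithm faces `m - f` processors with every request successful. From then on each round
splits the remaining processors into halves of sizes `⌈n/2⌉` and `⌊n/2⌋`, and the larger half
dominates; this is exactly the recursion `⌈log₂ (n + 2)⌉ = ⌈log₂ (⌈n/2⌉ + 1)⌉ + 1`.
-/

theorem HGP_succ_of_head_true {n : ℕ} {b : ℕ → Bool} (hb : b 0 = true) :
    HGP (n + 1) b =
      1 + max (HGP ((n + 1) / 2) (oddSeq (tailSeq b))) (HGP (n / 2) (evenSeq (tailSeq b))) := by
  rw [HGP, if_pos hb]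

theorem HGP_succ_of_head_false {n : ℕ} {b : ℕ → Bool} (hb : b 0 = false) :
    HGP (n + 1) b = 1 + HGP n (tailSeq b) := by
  rw [HGP, if_neg (by simp [hb])]

theorem Nat.clog_two_add_two (n : ℕ) : Nat.clog 2 (n + 2) = Nat.clog 2 ((n + 1) / 2 + 1) + 1 := by
  rw [Nat.clog_of_two_le one_lt_two (by omega)]
  congr 2
  omega

theorem HGP_const_true (n : ℕ) : HGP n (fun _ => true) = Nat.clog 2 (n + 1) := by
  induction n using Nat.strong_induction_on with
  | _ n ih =>
    rcases n with _ | n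
    · simp [HGP]
    have h_odd := ih ((n + 1) / 2) (by omega)
    have h_even := ih (n / 2) (by omega)
    have h_max : max (Nat.clog 2 ((n + 1) / 2 + 1)) (Nat.clog 2 (n / 2 + 1)) =
        Nat.clog 2 ((n + 1) / 2 + 1) :=
      max_eq_left (Nat.clog_mono_right 2 (by omega))
    rw [HGP_succ_of_head_true rfl]
    change 1 + max (HGP _ fun _ => true) (HGP _ fun _ => true) = _
    rw [h_odd, h_even, h_max, Nat.clog_two_add_two, add_comm]

theorem tailSeq_decide_succ_le (f : ℕ) :
    tailSeq (fun i => decide (f + 1 ≤ i)) = fun i => decide (f ≤ i) := by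
  funext i
  simp [tailSeq]

theorem HGP_add_failures (n f : ℕ) :
    HGP (n + f) (fun i => decide (f ≤ i)) = f + Nat.clog 2 (n + 1) := by
  induction f with
  | zero => simpa using HGP_const_true n
  | succ f ih =>
    rw [← add_assoc, HGP_succ_of_head_false (by simp), tailSeq_decide_succ_le, ih]
    omega

/-- Tightness of the worst-case bound for the GP algorithm: if exactly the
first `f` requested processors are failed, the runtime is exactly
`f + ⌈log₂ (m+1-f)⌉`. -/
theorem hgp_adversarial_bound_tight (m f : ℕ) (hfm : f ≤ m) :
    HGP m (fun i => decide (f ≤ i)) = f + Nat.clog 2 (m + 1 - f) := by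
  obtain ⟨n, rfl⟩ := Nat.exists_eq_add_of_le' hfm
  rw [HGP_add_failures, show n + f + 1 - f = n + 1 by omega]
end

section
/- Runtime of the GP algorithm under random failures: let n ≥ 2, let c > 1 be a real constant, and let p ∈ (0,1). Then μ_p { b : ℕ → Bool | (c/p)·(⌈log₂(n−1)⌉ + 1) < (HGP (n−1) b : ℝ) } ≤ n · exp( − ((c−1)²/(2c)) · (⌈log₂(n−1)⌉ − 1) ). That is, when each of the n−1 non-start processors fails independently with probability 1−p, the execution time of the GP algorithm is at most (c/p)(⌈log₂(n−1)⌉+1) with probability at least 1 − n·exp(−((c−1)²/(2c))(⌈log₂(n−1)⌉−1)). -/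
open MeasureTheory

/-!
If the algorithm is still running after `T + 1` rounds, then some path of length `T` down the
recursion tree of `HGP` is followed by the failure pattern and ends at a subproblem with at least
two uninformed processors. Every successful request on the path halves the number of uninformed
processors, so the path has `k ≤ K = ⌈log₂(n-1)⌉ - 1` successes. The requests along one path read
distinct bits of `b`, so the path is followed with probability `p^k (1-p)^(T-k)`; at a success
the path may enter either half. The union bound therefore leaves a binomial lower tail weighted
by `2^k ≤ 2^K ≤ n`, and the exponential-moment (Chernoff) method bounds it by
`2^K exp(-((c-1)²/(2c)) K)` once `p T ≥ c K`.
-/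

open Finset Real

/-- A step down the recursion tree: `none` is a failed request, after which the algorithm
continues on `tailSeq b`; `some false` and `some true` are a successful request followed by the
branch on `oddSeq (tailSeq b)` and on `evenSeq (tailSeq b)`. Bit `i` of the child's failure
pattern is bit `childIndex a i` of the parent's. -/
def childIndex : Option Bool → ℕ → ℕ
  | none, i => i + 1
  | some false, i => 2 * i + 1
  | some true, i => 2 * i + 2

def childSize (m : ℕ) : Option Bool → ℕ
  | none => m - 1
  | some false => m / 2
  | some true => (m - 1) / 2

/-- The position in the root's failure pattern of the request made at the end of the path `w`. -/
def queryIndex (w : List (Option Bool)) : ℕ := w.foldr childIndex 0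

def IsConsistent (b : ℕ → Bool) (w : List (Option Bool)) : Prop :=
  ∀ j : Fin w.length, b (queryIndex (w.take j)) = w[j].isSome

theorem HGP_le_self (m : ℕ) (b : ℕ → Bool) : HGP m b ≤ m := by
  induction m using Nat.strong_induction_on generalizing b with
  | _ m ih =>
    cases m with
    | zero => simp [HGP]
    | succ m =>
      rw [HGP]
      split
      · have hodd := ih ((m + 1) / 2) (by omega) (oddSeq (tailSeq b))
        have heven := ih (m / 2) (by omega) (evenSeq (tailSeq b))
        omega
      · have := ih m (by omega) (tailSeq b)
        omega

theorem exists_child_of_succ_lt_HGP {N m : ℕ} {b : ℕ → Bool} (h : N + 1 < HGP m b) :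
    ∃ a, b 0 = a.isSome ∧ N < HGP (childSize m a) (b ∘ childIndex a) := by
  cases m with
  | zero => simp [HGP] at h
  | succ m =>
    rw [HGP] at h
    cases hb : b 0 <;> simp only [hb, Bool.false_eq_true, if_true, if_false] at h
    · exact ⟨none, rfl, (by omega : N < HGP m (tailSeq b))⟩
    · rcases lt_max_iff.1 (by omega : N < max (HGP ((m + 1) / 2) (oddSeq (tailSeq b)))
        (HGP (m / 2) (evenSeq (tailSeq b)))) with h | h
      · exact ⟨some false, rfl, h⟩
      · exact ⟨some true, rfl, h⟩

theorem IsConsistent.cons {b : ℕ → Bool} {a : Option Bool} {w : List (Option Bool)}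
    (h0 : b 0 = a.isSome) (hw : IsConsistent (b ∘ childIndex a) w) :
    IsConsistent b (a :: w) := by
  rintro ⟨_ | j, hj⟩
  · exact h0
  · exact hw ⟨j, by simpa using hj⟩

theorem exists_isConsistent_of_add_lt_HGP {T k m : ℕ} {b : ℕ → Bool} (h : T + k < HGP m b) :
    ∃ w : List (Option Bool), w.length = T ∧ IsConsistent b w ∧ k < w.foldl childSize m := by
  induction T generalizing m b with
  | zero => exact ⟨[], rfl, nofun, by simpa using h.trans_le (HGP_le_self m b)⟩
  | succ T ih =>
    obtain ⟨a, ha, hlt⟩ := exists_child_of_succ_lt_HGP (by omega : T + k + 1 < HGP m b)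
    obtain ⟨w, hlen, hw, hk⟩ := ih hlt
    exact ⟨a :: w, by simp [hlen], hw.cons ha, hk⟩

theorem two_pow_countP_mul_foldl_childSize_le (w : List (Option Bool)) (m : ℕ) :
    2 ^ w.countP Option.isSome * w.foldl childSize m ≤ m := by
  induction w generalizing m with
  | nil => simp
  | cons a w ih =>
    rw [List.countP_cons, List.foldl_cons, pow_add, mul_right_comm]
    refine (Nat.mul_le_mul_right _ (ih _)).trans ?_
    rcases a with _ | _ | _ <;> simp [childSize] <;> omega

theorem exists_isConsistent_countP_lt_clog {T m : ℕ} {b : ℕ → Bool} (h : T + 1 < HGP m b) :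
    ∃ w : List (Option Bool), w.length = T ∧ w.countP Option.isSome < Nat.clog 2 m ∧
      IsConsistent b w := by
  obtain ⟨w, hlen, hw, hsize⟩ := exists_isConsistent_of_add_lt_HGP h
  refine ⟨w, hlen, (Nat.lt_clog_iff_pow_lt one_lt_two).2 ?_, hw⟩
  calc 2 ^ w.countP Option.isSome < 2 ^ w.countP Option.isSome * 2 :=
        lt_mul_of_one_lt_right (by positivity) one_lt_two
    _ ≤ 2 ^ w.countP Option.isSome * w.foldl childSize m := Nat.mul_le_mul_left _ hsize
    _ ≤ m := two_pow_countP_mul_foldl_childSize_le w m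

theorem setOf_lt_HGP_subset {R : ℝ} (hR : 1 ≤ R) (m : ℕ) :
    {b | R < HGP m b} ⊆ {b | ∃ w : List (Option Bool), w.length = ⌊R⌋₊ - 1 ∧
      w.countP Option.isSome < Nat.clog 2 m ∧ IsConsistent b w} := by
  intro b hb
  have hlt : ⌊R⌋₊ < HGP m b := (Nat.floor_lt (by linarith)).2 hb
  have hfloor : 1 ≤ ⌊R⌋₊ := Nat.le_floor (by exact_mod_cast hR)
  exact exists_isConsistent_countP_lt_clog (by omega)

theorem queryIndex_lt_append (u : List (Option Bool)) {v : List (Option Bool)} (hv : v ≠ []) :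
    queryIndex u < queryIndex (u ++ v) := by
  induction u with
  | nil =>
    obtain ⟨a, v, rfl⟩ := List.exists_cons_of_ne_nil hv
    rcases a with _ | _ | _ <;> simp [queryIndex, childIndex]
  | cons a u ih =>
    rcases a with _ | _ | _ <;> simpa [queryIndex, childIndex] using ih

theorem strictMono_queryIndex_take (w : List (Option Bool)) :
    StrictMono fun j : Fin w.length => queryIndex (w.take j) := by
  intro i j hij
  have hprefix : (w.take j).take i = w.take i := by
    rw [List.take_take, min_eq_left (Fin.lt_def.1 hij).le]
  dsimp only
  conv_rhs => rw [← List.take_append_drop i (w.take j), hprefix]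
  refine queryIndex_lt_append _ fun h => ?_
  have := congrArg List.length h
  simp at this
  omega

def pathWeight (x y : ℝ) (w : List (Option Bool)) : ℝ :=
  (w.map fun a => if a.isSome then x else y).prod

theorem pathWeight_nonneg {x y : ℝ} (hx : 0 ≤ x) (hy : 0 ≤ y) (w : List (Option Bool)) :
    0 ≤ pathWeight x y w :=
  List.prod_nonneg fun r hr => by
    obtain ⟨a, -, rfl⟩ := List.mem_map.1 hr
    split <;> assumption

theorem pathWeight_mul_exp_neg (x y t : ℝ) (w : List (Option Bool)) :
    pathWeight (x * exp (-t)) y w = exp (-(t * w.countP Option.isSome)) * pathWeight x y w := by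
  induction w with
  | nil => simp [pathWeight]
  | cons a w ih =>
    simp only [pathWeight, List.map_cons, List.prod_cons, List.countP_cons] at *
    rw [ih]
    rcases a with _ | _ | _ <;> simp [mul_add, exp_add] <;> ring

theorem sum_pathWeight_ofFn (x y : ℝ) (T : ℕ) :
    ∑ σ : Fin T → Option Bool, pathWeight x y (List.ofFn σ) = (y + 2 * x) ^ T := by
  simp only [pathWeight, List.map_ofFn, List.prod_ofFn, Function.comp_def]
  rw [← Fintype.sum_pow (fun a : Option Bool => if a.isSome then x else y),
    Fintype.sum_option, Fintype.sum_bool]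
  simp
  ring

/-- Each path with at most `K` successes is charged `exp (t * (K - successes)) ≥ 1` times its
weight; the sum over all paths then factorizes. -/
theorem sum_pathWeight_ofFn_countP_le {x y t : ℝ} (hx : 0 ≤ x) (hy : 0 ≤ y) (ht : 0 ≤ t)
    (T K : ℕ) :
    ∑ σ : Fin T → Option Bool with (List.ofFn σ).countP Option.isSome ≤ K,
      pathWeight x y (List.ofFn σ) ≤ exp (t * K) * (y + 2 * (x * exp (-t))) ^ T := by
  rw [← sum_pathWeight_ofFn, mul_sum]
  refine (sum_le_sum fun σ hσ => ?_).trans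
    (sum_le_sum_of_subset_of_nonneg (filter_subset _ _) fun σ _ _ => by
      have := pathWeight_nonneg (by positivity : 0 ≤ x * exp (-t)) hy (List.ofFn σ)
      positivity)
  have hK : ((List.ofFn σ).countP Option.isSome : ℝ) ≤ K := by
    exact_mod_cast (mem_filter.1 hσ).2
  rw [pathWeight_mul_exp_neg, ← mul_assoc, ← exp_add]
  exact le_mul_of_one_le_left (pathWeight_nonneg hx hy _) (one_le_exp (by nlinarith))

theorem exp_neg_le_one_sub_add_sq_div_two {x : ℝ} (hx : 0 ≤ x) :
    exp (-x) ≤ 1 - x + x ^ 2 / 2 := by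
  have hpos : 0 < 1 + x + x ^ 2 / 2 := by positivity
  calc exp (-x) = (exp x)⁻¹ := exp_neg x
    _ ≤ (1 + x + x ^ 2 / 2)⁻¹ := inv_anti₀ hpos (quadratic_le_exp_of_nonneg hx)
    _ ≤ 1 - x + x ^ 2 / 2 := by
      rw [inv_eq_one_div, div_le_iff₀ hpos]
      nlinarith [pow_nonneg hx 4]

theorem chernoff_exponent_le {c μ K : ℝ} (hc : 1 < c) (hK : 0 ≤ K) (hcK : c * K ≤ μ)
    (hμ : 0 < μ) :
    (μ - K) / μ * K + μ * (exp (-((μ - K) / μ)) - 1) ≤ -((c - 1) ^ 2 / (2 * c)) * K := by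
  set s := (μ - K) / μ with hs_def
  have hs : 0 ≤ s := div_nonneg (by nlinarith) hμ.le
  have hquad := exp_neg_le_one_sub_add_sq_div_two hs
  calc s * K + μ * (exp (-s) - 1) ≤ s * K + μ * (-s + s ^ 2 / 2) := by nlinarith
    _ = -((μ - K) ^ 2 / (2 * μ)) := by rw [hs_def]; field_simp; ring
    _ ≤ -((c - 1) ^ 2 / (2 * c)) * K := by
      rw [neg_mul, neg_le_neg_iff, div_mul_eq_mul_div,
        div_le_div_iff₀ (by linarith) (by linarith)]
      -- `c (μ - K)² - (c - 1)² K μ = (μ - c K) (c μ - K)`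
      nlinarith [mul_nonneg (sub_nonneg.2 hcK) (by nlinarith : 0 ≤ c * μ - K)]

/-- The parameter is `t = s + log 2` with `s = 1 - K / (p T)`: the `log 2` turns the two branches
of a success into the factor `2 ^ K`, and `s` is the usual lower-tail Chernoff parameter. -/
theorem exists_exp_mul_pow_le {c p : ℝ} (hc : 1 < c) (hp0 : 0 ≤ p) (hp1 : p ≤ 1) {K T : ℕ}
    (hcK : c * K ≤ p * T) :
    ∃ t, 0 ≤ t ∧ exp (t * K) * (1 - p + 2 * (p * exp (-t))) ^ T ≤
      2 ^ K * exp (-((c - 1) ^ 2 / (2 * c)) * K) := by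
  rcases Nat.eq_zero_or_pos K with rfl | hK
  · exact ⟨log 2, log_nonneg one_le_two, by simp [exp_neg, exp_log, mul_comm p]⟩
  have hμ : 0 < p * T := lt_of_lt_of_le (by positivity) hcK
  set s := (p * T - K) / (p * T)
  have hs : 0 ≤ s := div_nonneg (by nlinarith) hμ.le
  refine ⟨s + log 2, add_nonneg hs (log_nonneg one_le_two), ?_⟩
  have hbase : 1 - p + 2 * (p * exp (-(s + log 2))) = 1 + p * (exp (-s) - 1) := by
    rw [neg_add, exp_add, exp_neg (log 2), exp_log two_pos]; ring
  have hpow : (1 + p * (exp (-s) - 1)) ^ T ≤ exp (p * T * (exp (-s) - 1)) := by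
    calc (1 + p * (exp (-s) - 1)) ^ T ≤ exp (p * (exp (-s) - 1)) ^ T :=
          pow_le_pow_left₀ (by nlinarith [exp_pos (-s)])
            (by linarith [add_one_le_exp (p * (exp (-s) - 1))]) T
      _ = exp (p * T * (exp (-s) - 1)) := by rw [← exp_nat_mul]; ring_nf
  calc exp ((s + log 2) * K) * (1 - p + 2 * (p * exp (-(s + log 2)))) ^ T
      = 2 ^ K * (exp (s * K) * (1 + p * (exp (-s) - 1)) ^ T) := by
        rw [hbase, add_mul, exp_add, mul_comm (log 2), exp_nat_mul, exp_log two_pos]; ring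
    _ ≤ 2 ^ K * exp (s * K + p * T * (exp (-s) - 1)) := by rw [exp_add]; gcongr
    _ ≤ 2 ^ K * exp (-((c - 1) ^ 2 / (2 * c)) * K) := by
        gcongr
        exact chernoff_exponent_le hc (Nat.cast_nonneg K) hcK hμ

def IsBernoulliProduct (p : ℝ) (μ : Measure (ℕ → Bool)) : Prop :=
  ∀ (s : Finset ℕ) (v : ℕ → Bool), μ {b | ∀ i ∈ s, b i = v i} =
    ∏ i ∈ s, (if v i then ENNReal.ofReal p else ENNReal.ofReal (1 - p))

namespace IsBernoulliProduct

variable {p : ℝ} {μ : Measure (ℕ → Bool)}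

theorem measure_forall_apply_eq (hμ : IsBernoulliProduct p μ) {ι : Type*} [Fintype ι]
    {e : ι → ℕ} (he : Function.Injective e) (v : ι → Bool) :
    μ {b | ∀ j, b (e j) = v j} =
      ∏ j, (if v j then ENNReal.ofReal p else ENNReal.ofReal (1 - p)) := by
  classical
  set v' := Function.extend e v fun _ => false
  have hset : {b : ℕ → Bool | ∀ j, b (e j) = v j} = {b | ∀ i ∈ univ.image e, b i = v' i} := by
    simp [v', he.extend_apply]
  rw [hset, hμ, prod_image he.injOn]
  simp [v', he.extend_apply]

theorem measure_isConsistent (hμ : IsBernoulliProduct p μ) (hp0 : 0 ≤ p) (hp1 : p ≤ 1)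
    (w : List (Option Bool)) :
    μ {b | IsConsistent b w} = ENNReal.ofReal (pathWeight p (1 - p) w) := by
  unfold IsConsistent
  rw [hμ.measure_forall_apply_eq (strictMono_queryIndex_take w).injective,
    pathWeight, ← Fin.prod_univ_fun_getElem, ENNReal.ofReal_prod_of_nonneg]
  · exact prod_congr rfl fun j _ => (apply_ite ENNReal.ofReal _ _ _).symm
  · intro j _
    split <;> linarith

theorem measure_exists_isConsistent_le (hμ : IsBernoulliProduct p μ) (hp0 : 0 ≤ p)
    (hp1 : p ≤ 1) (T K : ℕ) {t : ℝ} (ht : 0 ≤ t) :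
    μ {b | ∃ w : List (Option Bool), w.length = T ∧ w.countP Option.isSome ≤ K ∧
      IsConsistent b w} ≤ ENNReal.ofReal (exp (t * K) * (1 - p + 2 * (p * exp (-t))) ^ T) := by
  classical
  let F : Finset (Fin T → Option Bool) := {σ | (List.ofFn σ).countP Option.isSome ≤ K}
  have hsub : {b | ∃ w : List (Option Bool), w.length = T ∧ w.countP Option.isSome ≤ K ∧
      IsConsistent b w} ⊆ ⋃ σ ∈ F, {b | IsConsistent b (List.ofFn σ)} := by
    rintro b ⟨w, rfl, hK, hb⟩
    refine Set.mem_iUnion₂.2 ⟨fun j => w[j], ?_, ?_⟩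
    · simpa [F, List.ofFn_getElem] using hK
    · simpa [List.ofFn_getElem] using hb
  calc μ _ ≤ ∑ σ ∈ F, μ {b | IsConsistent b (List.ofFn σ)} :=
        (measure_mono hsub).trans (measure_biUnion_finset_le _ _)
    _ = ENNReal.ofReal (∑ σ ∈ F, pathWeight p (1 - p) (List.ofFn σ)) := by
        rw [ENNReal.ofReal_sum_of_nonneg fun σ _ => pathWeight_nonneg hp0 (by linarith) _]
        exact sum_congr rfl fun σ _ => hμ.measure_isConsistent hp0 hp1 _
    _ ≤ _ := ENNReal.ofReal_le_ofReal (sum_pathWeight_ofFn_countP_le hp0 (by linarith) ht T K)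

end IsBernoulliProduct

theorem mul_le_mul_floor_sub_one {c p : ℝ} (hp0 : 0 < p) (hpc : p ≤ c) (K : ℕ) :
    c * K ≤ p * (⌊c / p * (K + 2)⌋₊ - 1 : ℕ) := by
  have hcp : 1 ≤ c / p := (one_le_div hp0).2 hpc
  have hfloor : 1 ≤ ⌊c / p * (K + 2)⌋₊ :=
    Nat.le_floor (by push_cast; nlinarith [(K.cast_nonneg : (0 : ℝ) ≤ K)])
  have hpR : p * (c / p * (K + 2)) = c * (K + 2) := by field_simp
  rw [Nat.cast_sub hfloor, Nat.cast_one]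
  nlinarith [Nat.lt_floor_add_one (c / p * (K + 2))]

/-- Runtime of the GP algorithm under random failures: if each of the requests
succeeds independently with probability `p` (i.e. `μ` is the i.i.d. Bernoulli(p)
product measure on `ℕ → Bool`), then the probability that the GP algorithm on
`n` processors (one informed, `n-1` uninformed) runs longer than
`(c/p)(⌈log₂(n-1)⌉+1)` rounds is at most
`n · exp(-((c-1)²/(2c))(⌈log₂(n-1)⌉-1))`. -/
theorem gp_random_failures (n : ℕ) (hn : 2 ≤ n) (c : ℝ) (hc : 1 < c)
    (p : ℝ) (hp0 : 0 < p) (hp1 : p < 1)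
    (μ : Measure (ℕ → Bool)) [IsProbabilityMeasure μ]
    (hμ : ∀ (s : Finset ℕ) (v : ℕ → Bool),
      μ {b | ∀ i ∈ s, b i = v i} =
        ∏ i ∈ s, (if v i then ENNReal.ofReal p else ENNReal.ofReal (1 - p))) :
    μ {b | c / p * ((Nat.clog 2 (n-1) : ℝ) + 1) < (HGP (n-1) b : ℝ)} ≤
      ENNReal.ofReal ((n : ℝ) *
        Real.exp (-((c-1)^2 / (2*c)) * ((Nat.clog 2 (n-1) : ℝ) - 1))) := by
  obtain hL | ⟨K, hL⟩ : Nat.clog 2 (n - 1) = 0 ∨ ∃ K, Nat.clog 2 (n - 1) = K + 1 :=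
    (Nat.eq_zero_or_eq_succ_pred _).imp id fun h => ⟨_, h⟩
  · refine prob_le_one.trans ?_
    rw [hL, ← ENNReal.ofReal_one]
    refine ENNReal.ofReal_le_ofReal
      (one_le_mul_of_one_le_of_one_le (by norm_cast; omega) (one_le_exp ?_))
    have : 0 ≤ (c - 1) ^ 2 / (2 * c) := by positivity
    linarith
  rw [hL, Nat.cast_succ, add_sub_cancel_right, add_assoc, one_add_one_eq_two]
  have hR : 1 ≤ c / p * (K + 2) := by
    have : 1 < c / p := (one_lt_div hp0).2 (by linarith)
    nlinarith [(K.cast_nonneg : (0 : ℝ) ≤ K)]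
  have h2K : (2 : ℝ) ^ K ≤ n := by
    exact_mod_cast (Nat.pow_lt_of_lt_clog (by omega : K < Nat.clog 2 (n - 1))).le.trans
      (Nat.sub_le n 1)
  obtain ⟨t, ht, hbound⟩ :=
    exists_exp_mul_pow_le hc hp0.le hp1.le (mul_le_mul_floor_sub_one hp0 (by linarith) K)
  calc μ {b | c / p * (K + 2) < HGP (n - 1) b}
      ≤ μ {b | ∃ w : List (Option Bool), w.length = ⌊c / p * (K + 2)⌋₊ - 1 ∧
          w.countP Option.isSome ≤ K ∧ IsConsistent b w} :=
        measure_mono <| (setOf_lt_HGP_subset hR _).trans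
          fun b ⟨w, hw, hcnt, hcons⟩ => ⟨w, hw, by omega, hcons⟩
    _ ≤ _ := IsBernoulliProduct.measure_exists_isConsistent_le hμ hp0.le hp1.le _ K ht
    _ ≤ _ := ENNReal.ofReal_le_ofReal
        (hbound.trans (mul_le_mul_of_nonneg_right h2K (exp_pos _).le))
end

section
/- Concentration of the number of failures (step (7) in the proof of the adversarial-failure theorem): let n ≥ 2, let ε = √(ln n / (n−1)), let f : ℕ with (f : ℝ) < (n−1)(1−ε), and let ν be the product probability measure on Fin (n−1) → Bool in which each coordinate is independently false with probability f/(n−1) + ε (and true otherwise). Then ν { c | f ≤ (number of indices i with c i = false) } ≥ 1 − n^(−2). -/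
/-!
Under `ν` the coordinates are independent: a finite measure on a countable space is determined
by its singletons, so `ν` is the product of Bernoulli laws giving `false` mass
`q = f/(n-1) + ε`. Hoeffding's inequality for the count of `false` coordinates gives
`P(#false ≤ (n-1)q - t) ≤ exp(-2t²/(n-1))`; for `t = (n-1)ε` the threshold is exactly `f` and
the bound is `exp(-2 log n) = n⁻²`.
-/

open MeasureTheory ProbabilityTheory Real
open scoped Finset

section BinomialLowerTail

variable {α ι : Type*} [MeasurableSpace α] {β : Measure α} [IsProbabilityMeasure β] {S : Set α}

lemma hasSubgaussianMGF_measureReal_sub_indicator (hS : MeasurableSet S) :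
    HasSubgaussianMGF (fun a ↦ β.real S - S.indicator 1 a) (1 / 4) β := by
  have hIcc : ∀ a, S.indicator (1 : α → ℝ) a ∈ Set.Icc 0 1 := fun a ↦ by
    by_cases ha : a ∈ S <;> simp [ha]
  have h := (hasSubgaussianMGF_of_mem_Icc (measurable_one.indicator hS).aemeasurable
    (ae_of_all β hIcc)).neg
  rw [integral_indicator_one hS] at h
  convert h using 1
  · ext a; simp
  · norm_num

variable [Fintype ι] [DecidablePred (· ∈ S)]

theorem measureReal_pi_card_mem_le_sub_le (hS : MeasurableSet S) {t : ℝ} (ht : 0 ≤ t) :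
    (Measure.pi fun _ : ι ↦ β).real
        {c | (#{i | c i ∈ S} : ℝ) ≤ Fintype.card ι * β.real S - t}
      ≤ exp (-2 * t ^ 2 / Fintype.card ι) := by
  have hindep := iIndepFun_pi (μ := fun _ : ι ↦ β)
    (X := fun _ a ↦ β.real S - S.indicator 1 a) fun _ ↦ by fun_prop
  have hsub : ∀ i ∈ (Finset.univ : Finset ι), HasSubgaussianMGF
      (fun c ↦ β.real S - S.indicator 1 (c i)) (1 / 4) (Measure.pi fun _ ↦ β) := fun i _ ↦ by
    change HasSubgaussianMGF ((fun a ↦ β.real S - S.indicator 1 a) ∘ fun c : ι → α ↦ c i) _ _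
    refine .of_map (measurable_pi_apply i).aemeasurable ?_
    rw [(measurePreserving_eval (fun _ : ι ↦ β) i).map_eq]
    exact hasSubgaussianMGF_measureReal_sub_indicator hS
  have hsum : ∀ c : ι → α, ∑ i, (β.real S - S.indicator 1 (c i))
      = Fintype.card ι * β.real S - #{i | c i ∈ S} := fun c ↦ by
    simp [Finset.sum_sub_distrib, Set.indicator_apply, Finset.sum_boole]
  convert HasSubgaussianMGF.measure_sum_ge_le_of_iIndepFun hindep hsub ht using 2
  · ext c
    simp only [Set.mem_ofPred_eq, hsum]
    constructor <;> intro h <;> linarith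
  · simp only [Finset.sum_const, Finset.card_univ, nsmul_eq_mul, NNReal.coe_mul,
      NNReal.coe_natCast, one_div, NNReal.coe_inv, NNReal.coe_ofNat]
    ring

end BinomialLowerTail

theorem MeasureTheory.Measure.eq_pi_of_apply_singleton {ι α : Type*} [Fintype ι]
    [MeasurableSpace α] [Countable α] [MeasurableSingletonClass α] {β : Measure α} [SigmaFinite β]
    {ν : Measure (ι → α)} (h : ∀ c, ν {c} = ∏ i, β {c i}) : ν = Measure.pi fun _ ↦ β :=
  Measure.ext_of_singleton fun c ↦ by rw [h, Measure.pi_singleton]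

lemma exp_neg_two_mul_sq_div_eq_zpow {x ε : ℝ} (hx : 1 < x) (hε : ε = √(log x / (x - 1))) :
    exp (-2 * ((x - 1) * ε) ^ 2 / (x - 1)) = x ^ (-2 : ℤ) := by
  have hx1 : 0 < x - 1 := by linarith
  have hε2 : ε ^ 2 = log x / (x - 1) := by
    rw [hε, sq_sqrt (div_nonneg (log_nonneg hx.le) hx1.le)]
  have hexponent : -2 * ((x - 1) * ε) ^ 2 / (x - 1) = log x * (-2 : ℤ) := by
    rw [mul_pow, hε2]; field_simp; push_cast; ring
  rw [hexponent, ← rpow_def_of_pos (by linarith), rpow_intCast]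

/-- Concentration of the number of failures: if `ν` is the product measure on
`Fin (n-1) → Bool` in which each coordinate is independently `false` with
probability `f/(n-1) + ε` (and `true` otherwise), where
`ε = √(ln n/(n-1))` and `f < (n-1)(1-ε)`, then with probability at least
`1 - n⁻²` at least `f` coordinates are `false`. -/
theorem failure_count_concentration (n : ℕ) (hn : 2 ≤ n) (ε : ℝ)
    (hε : ε = Real.sqrt (Real.log n / ((n:ℝ) - 1)))
    (f : ℕ) (hf : (f : ℝ) < ((n:ℝ) - 1) * (1 - ε))
    (ν : Measure (Fin (n-1) → Bool)) [IsProbabilityMeasure ν]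
    (hν : ∀ c : Fin (n-1) → Bool, ν {c} =
      ∏ i, (if c i then ENNReal.ofReal (1 - ((f:ℝ) / ((n:ℝ) - 1) + ε))
            else ENNReal.ofReal ((f:ℝ) / ((n:ℝ) - 1) + ε))) :
    ENNReal.ofReal (1 - (n:ℝ)^(-2 : ℤ)) ≤
      ν {c | f ≤ (Finset.univ.filter (fun i => c i = false)).card} := by
  have hn1 : (1 : ℝ) < n := by exact_mod_cast hn
  have hε0 : 0 ≤ ε := hε ▸ sqrt_nonneg _
  set q := (f : ℝ) / (n - 1) + ε with hq_def
  have hfq : (f : ℝ) = (n - 1) * q - (n - 1) * ε := by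
    rw [hq_def, mul_add, mul_div_cancel₀ _ (by linarith)]; ring
  have hq : q ∈ unitInterval := ⟨by positivity, by nlinarith⟩
  have hν_pi : ν = Measure.pi fun _ ↦ Ber(false, true, ⟨q, hq⟩) :=
    Measure.eq_pi_of_apply_singleton fun c ↦ by
      rw [hν]; congr 1; ext i; cases c i <;> simp [← ENNReal.ofReal_coe_nnreal]
  have htail := measureReal_pi_card_mem_le_sub_le (ι := Fin (n - 1))
    (β := Ber(false, true, ⟨q, hq⟩)) (measurableSet_singleton false) (t := (n - 1) * ε)
    (by positivity)
  rw [Fintype.card_fin, Nat.cast_pred (by omega), exp_neg_two_mul_sq_div_eq_zpow hn1 hε,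
    bernoulliMeasure_real_apply_of_mem_of_notMem _ (measurableSet_singleton _) rfl (by simp),
    ← hfq, ← hν_pi] at htail
  have hcompl : ν.real {c | f ≤ #{i | c i = false}}ᶜ ≤ (n : ℝ) ^ (-2 : ℤ) := by
    refine (measureReal_mono fun c hc ↦ ?_).trans htail
    simp only [Set.mem_compl_iff, Set.mem_ofPred_eq, not_le, Set.mem_singleton_iff] at hc ⊢
    exact_mod_cast hc.le
  rw [probReal_compl_eq_one_sub .of_discrete] at hcompl
  exact ENNReal.ofReal_le_of_le_toReal (by rw [← measureReal_def]; linarith)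
end
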